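/- Let t₁ and t₂ be red-black trees with black heights n₁ and n₂ respectively, and let a be a key. Then the black height of the red-black tree returned by Join(t₁, a, t₂) is either max(n₁, n₂) or 1 + max(n₁, n₂). -/
import Mathlib


/-- Node colors for red-black trees. -/
inductive Color where
  | red : Color
  | black : Color
deriving DecidableEq

/-- Plain binary trees with colored nodes. -/
inductive RBTree (α : Type) where
  | leaf : RBTree α
  | node : Color → RBTree α → α → RBTree α → RBTree α

namespace RBTree

variable {α : Type}

/-- The black height of a tree (computed along the left spine). -/
def blackHeight : RBTree α → ℕ
  | leaf => 0
  | node Color.red l _ _ => blackHeight l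
  | node Color.black l _ _ => blackHeight l + 1

/-- The color of the root; leaves count as black. -/
def rootColor : RBTree α → Color
  | leaf => Color.black
  | node c _ _ _ => c

/-- In-order traversal. -/
def inorder : RBTree α → List α
  | leaf => []
  | node _ l a r => inorder l ++ a :: inorder r

/-- Number of internal (key-carrying) nodes. -/
def size : RBTree α → ℕ
  | leaf => 0
  | node _ l _ r => size l + 1 + size r

/-- `IsRBT t y n` means `t` is a valid red-black tree with root color `y`
and black height `n`, mirroring the indexed inductive family `irbt`. -/
inductive IsRBT : RBTree α → Color → ℕ → Prop where
  | leaf : IsRBT leaf Color.black 0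
  | red {t₁ t₂ : RBTree α} {n : ℕ} (a : α) :
      IsRBT t₁ Color.black n → IsRBT t₂ Color.black n →
      IsRBT (node Color.red t₁ a t₂) Color.red n
  | black {t₁ t₂ : RBTree α} {y₁ y₂ : Color} {n : ℕ} (a : α) :
      IsRBT t₁ y₁ n → IsRBT t₂ y₂ n →
      IsRBT (node Color.black t₁ a t₂) Color.black (n + 1)

end RBTree
namespace RBTree

variable {α : Type}

/-- `IsARRBT t leftColor n` means `t` is an almost-right red-black tree with
black height `n`, where `leftColor` records the color of the left tree from
which it was created; a red-red violation on the right is allowed only when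
`leftColor` is red.  Mirrors the indexed inductive family `arrbt`. -/
inductive IsARRBT : RBTree α → Color → ℕ → Prop where
  | valid {t : RBTree α} {y : Color} {n : ℕ} (leftColor : Color) :
      IsRBT t y n → IsARRBT t leftColor n
  | violation {t₁ t₂ : RBTree α} {n : ℕ} (a : α) :
      IsRBT t₁ Color.black n → IsRBT t₂ Color.red n →
      IsARRBT (node Color.red t₁ a t₂) Color.red n

/-- The `JoinRight` algorithm of Blelloch et al.: attach `t₂` along the right
spine of `t₁`, rebalancing as necessary.  (The value returned when the
precondition `blackHeight t₁ > blackHeight t₂` fails is immaterial.) -/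
def joinRight : RBTree α → α → RBTree α → RBTree α
  | leaf, a, t₂ => node Color.red leaf a t₂
  | node Color.red t₁₁ a₁ t₁₂, a, t₂ =>
      -- Case I: recurse; valid or violation, the resulting tree is the same
      node Color.red t₁₁ a₁ (joinRight t₁₂ a t₂)
  | node Color.black t₁₁ a₁ t₁₂, a, t₂ =>
      if blackHeight (node Color.black t₁₁ a₁ t₁₂) = blackHeight t₂ + 1 then
        match t₂ with
        | node Color.red t₂₁ a₂ t₂₂ =>
            -- Case II
            node Color.red (node Color.black t₁₁ a₁ t₁₂) a
              (node Color.black t₂₁ a₂ t₂₂)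
        | t₂ =>
            match t₁₂ with
            | node Color.red t₁₂₁ a₁₂ t₁₂₂ =>
                -- Case III
                node Color.red (node Color.black t₁₁ a₁ t₁₂₁) a₁₂
                  (node Color.black t₁₂₂ a t₂)
            | t₁₂ =>
                -- Case IV
                node Color.black t₁₁ a₁ (node Color.red t₁₂ a t₂)
      else
        match joinRight t₁₂ a t₂ with
        | node Color.red t₁' a' (node Color.red t₂₁' a₂' t₂₂') =>
            -- Case VI: violation; rotate left
            node Color.red (node Color.black t₁₁ a₁ t₁') a'
              (node Color.black t₂₁' a₂' t₂₂')
        | r =>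
            -- Case V: valid
            node Color.black t₁₁ a₁ r

end RBTree
namespace RBTree

variable {α : Type}

/-- The symmetric `JoinLeft` algorithm: attach `t₁` along the left spine of
`t₂`, rebalancing as necessary. -/
def joinLeft : RBTree α → α → RBTree α → RBTree α
  | t₁, a, leaf => node Color.red t₁ a leaf
  | t₁, a, node Color.red t₂₁ a₂ t₂₂ =>
      node Color.red (joinLeft t₁ a t₂₁) a₂ t₂₂
  | t₁, a, node Color.black t₂₁ a₂ t₂₂ =>
      if blackHeight (node Color.black t₂₁ a₂ t₂₂) = blackHeight t₁ + 1 then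
        match t₁ with
        | node Color.red t₁₁ a₁ t₁₂ =>
            node Color.red (node Color.black t₁₁ a₁ t₁₂) a
              (node Color.black t₂₁ a₂ t₂₂)
        | t₁ =>
            match t₂₁ with
            | node Color.red t₂₁₁ a₂₁ t₂₁₂ =>
                node Color.red (node Color.black t₁ a t₂₁₁) a₂₁
                  (node Color.black t₂₁₂ a₂ t₂₂)
            | t₂₁ =>
                node Color.black (node Color.red t₁ a t₂₁) a₂ t₂₂
      else
        match joinLeft t₁ a t₂₁ with
        | node Color.red (node Color.red t₁₁' a₁' t₁₂') a' t₂' =>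
            node Color.red (node Color.black t₁₁' a₁' t₁₂') a'
              (node Color.black t₂' a₂ t₂₂)
        | r =>
            node Color.black r a₂ t₂₂

/-- The `Join` algorithm of Blelloch et al. on red-black trees. -/
def join (t₁ : RBTree α) (a : α) (t₂ : RBTree α) : RBTree α :=
  if blackHeight t₂ < blackHeight t₁ then
    match joinRight t₁ a t₂ with
    | node Color.red t₁' a' (node Color.red t₂₁' a₂' t₂₂') =>
        -- red-red violation on the right: recolor the root black
        node Color.black t₁' a' (node Color.red t₂₁' a₂' t₂₂')
    | t' => t'
  else if blackHeight t₁ < blackHeight t₂ then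
    match joinLeft t₁ a t₂ with
    | node Color.red (node Color.red t₁₁' a₁' t₁₂') a' t₂' =>
        -- red-red violation on the left: recolor the root black
        node Color.black (node Color.red t₁₁' a₁' t₁₂') a' t₂'
    | t' => t'
  else
    if rootColor t₁ = Color.black ∧ rootColor t₂ = Color.black then
      node Color.red t₁ a t₂
    else
      node Color.black t₁ a t₂

end RBTree
namespace RBTree

variable {α : Type}

lemma IsRBT.bh {t : RBTree α} {y : Color} {n : ℕ} (h : IsRBT t y n) :
    blackHeight t = n := by
  induction h <;> simp [blackHeight, *]

lemma IsRBT.rc {t : RBTree α} {y : Color} {n : ℕ} (h : IsRBT t y n) :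
    rootColor t = y := by
  cases h <;> rfl

/-- Almost-left red-black trees: symmetric to `IsARRBT`. -/
inductive IsALRBT : RBTree α → Color → ℕ → Prop where
  | valid {t : RBTree α} {y : Color} {n : ℕ} (rightColor : Color) :
      IsRBT t y n → IsALRBT t rightColor n
  | violation {t₁ t₂ : RBTree α} {n : ℕ} (a : α) :
      IsRBT t₁ Color.red n → IsRBT t₂ Color.black n →
      IsALRBT (node Color.red t₁ a t₂) Color.red n

lemma joinRight_spec {t₂ : RBTree α} {y₂ : Color} {n₂ : ℕ}
    (h₂ : IsRBT t₂ y₂ n₂) (a : α) :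
    ∀ {t₁ : RBTree α} {y₁ : Color} {n₁ : ℕ}, IsRBT t₁ y₁ n₁ → n₂ < n₁ →
    IsARRBT (joinRight t₁ a t₂) y₁ n₁ := by
  intro t₁ y₁ n₁ h₁
  induction h₁ with
  | leaf => omega
  | @red l r m a₁ hl hr ihl ihr =>
    intro hn
    simp only [joinRight]
    have H := ihr hn
    generalize hjr : joinRight r a t₂ = jr at H ⊢
    cases H with
    | valid lc h =>
      cases h with
      | leaf => omega
      | red b hu hv => exact .violation a₁ hl (.red b hu hv)
      | black b hu hv => exact .valid _ (.red a₁ hl (.black b hu hv))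
  | @black l r c₁ c₂ m a₁ hl hr ihl ihr =>
    intro hn
    have hbl := hl.bh
    have hb2 := h₂.bh
    by_cases hm : m = n₂
    · subst hm
      cases h₂ with
      | leaf =>
        simp only [joinRight, blackHeight, hbl, if_pos rfl]
        cases hr with
        | leaf => exact .valid _ (.black a₁ hl (.red a .leaf .leaf))
        | red b hu hv =>
          exact .valid _ (.red b (.black a₁ hl hu) (.black a hv .leaf))
      | @red u v k b hu hv =>
        simp only [joinRight, blackHeight, hbl, hu.bh, if_pos rfl]
        exact .valid _ (.red a (.black a₁ hl hr) (.black b hu hv))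
      | @black u v cu cv k b hu hv =>
        simp only [joinRight, blackHeight, hbl, hu.bh, if_pos rfl]
        cases hr with
        | red c hu' hv' =>
          exact .valid _ (.red c (.black a₁ hl hu') (.black a hv' (.black b hu hv)))
        | black c hu' hv' =>
          exact .valid _ (.black a₁ hl (.red a (.black c hu' hv') (.black b hu hv)))
    · have hn' : n₂ < m := by omega
      have H := ihr hn'
      have hcond : ¬ (blackHeight (node Color.black l a₁ r) = blackHeight t₂ + 1) := by
        simp only [blackHeight, hbl, hb2]; omega
      rw [joinRight.eq_def]
      dsimp only
      rw [if_neg hcond]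
      generalize hjr : joinRight r a t₂ = jr at H ⊢
      cases H with
      | valid lc h =>
        cases h with
        | leaf => omega
        | red b hu hv =>
          cases hv with
          | leaf => exact .valid _ (.black a₁ hl (.red b hu .leaf))
          | black c h1 h2 =>
            exact .valid _ (.black a₁ hl (.red b hu (.black c h1 h2)))
        | black b hu hv => exact .valid _ (.black a₁ hl (.black b hu hv))
      | violation b hu hv =>
        cases hv with
        | red c h1 h2 =>
          exact .valid _ (.red b (.black a₁ hl hu) (.black c h1 h2))

lemma joinLeft_spec {t₁ : RBTree α} {y₁ : Color} {n₁ : ℕ}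
    (h₁ : IsRBT t₁ y₁ n₁) (a : α) :
    ∀ {t₂ : RBTree α} {y₂ : Color} {n₂ : ℕ}, IsRBT t₂ y₂ n₂ → n₁ < n₂ →
    IsALRBT (joinLeft t₁ a t₂) y₂ n₂ := by
  intro t₂ y₂ n₂ h₂
  induction h₂ with
  | leaf => omega
  | @red u v m a₂ hu hv ihu ihv =>
    intro hn
    simp only [joinLeft]
    have H := ihu hn
    generalize hjl : joinLeft t₁ a u = jl at H ⊢
    cases H with
    | valid rc h =>
      cases h with
      | leaf => omega
      | red b h1 h2 => exact .violation a₂ (.red b h1 h2) hv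
      | black b h1 h2 => exact .valid _ (.red a₂ (.black b h1 h2) hv)
  | @black u v c₁ c₂ m a₂ hu hv ihu ihv =>
    intro hn
    have hbu := hu.bh
    have hb1 := h₁.bh
    by_cases hm : m = n₁
    · subst hm
      cases h₁ with
      | leaf =>
        simp only [joinLeft, blackHeight, hbu, if_pos rfl]
        cases hu with
        | leaf => exact .valid _ (.black a₂ (.red a .leaf .leaf) hv)
        | red b h1 h2 =>
          exact .valid _ (.red b (.black a .leaf h1) (.black a₂ h2 hv))
      | @red p q k b h1 h2 =>
        simp only [joinLeft, blackHeight, hbu, h1.bh, if_pos rfl]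
        exact .valid _ (.red a (.black b h1 h2) (.black a₂ hu hv))
      | @black p q cp cq k b h1 h2 =>
        simp only [joinLeft, blackHeight, hbu, h1.bh, if_pos rfl]
        cases hu with
        | red c h1' h2' =>
          exact .valid _ (.red c (.black a (.black b h1 h2) h1') (.black a₂ h2' hv))
        | black c h1' h2' =>
          exact .valid _ (.black a₂ (.red a (.black b h1 h2) (.black c h1' h2')) hv)
    · have hn' : n₁ < m := by omega
      have H := ihu hn'
      have hcond : ¬ (blackHeight (node Color.black u a₂ v) = blackHeight t₁ + 1) := by
        simp only [blackHeight, hbu, hb1]; omega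
      rw [joinLeft.eq_def]
      dsimp only
      rw [if_neg hcond]
      generalize hjl : joinLeft t₁ a u = jl at H ⊢
      cases H with
      | valid rc h =>
        cases h with
        | leaf => omega
        | red b h1 h2 =>
          cases h1 with
          | leaf => exact .valid _ (.black a₂ (.red b .leaf h2) hv)
          | black c h3 h4 =>
            exact .valid _ (.black a₂ (.red b (.black c h3 h4) h2) hv)
        | black b h1 h2 => exact .valid _ (.black a₂ (.black b h1 h2) hv)
      | violation b h1 h2 =>
        cases h1 with
        | red c h3 h4 =>
          exact .valid _ (.red b (.black c h3 h4) (.black a₂ h2 hv))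

end RBTree

/-- **Black height bound for Join.**  Let `t₁` and `t₂` be red-black trees
with black heights `n₁` and `n₂` respectively, and let `a` be a key.  Then
the black height of the red-black tree returned by `Join(t₁, a, t₂)` is
either `max n₁ n₂` or `1 + max n₁ n₂`. -/
theorem join_blackHeight_bound {α : Type} {y₁ y₂ : Color} {n₁ n₂ : ℕ}
    (t₁ : RBTree α) (a : α) (t₂ : RBTree α)
    (h₁ : RBTree.IsRBT t₁ y₁ n₁) (h₂ : RBTree.IsRBT t₂ y₂ n₂) :
    ∃ (y : Color) (n : ℕ), RBTree.IsRBT (RBTree.join t₁ a t₂) y n ∧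
      (n = max n₁ n₂ ∨ n = 1 + max n₁ n₂) := by
  have hb1 := h₁.bh
  have hb2 := h₂.bh
  rw [RBTree.join]
  by_cases hlt : RBTree.blackHeight t₂ < RBTree.blackHeight t₁
  · rw [if_pos hlt]
    have H := RBTree.joinRight_spec h₂ a h₁ (by omega)
    generalize hjr : RBTree.joinRight t₁ a t₂ = jr at H ⊢
    cases H with
    | valid lc h =>
      cases h with
      | leaf => omega
      | red b hu hv =>
        cases hv with
        | leaf => exact ⟨_, _, .red b hu .leaf, by omega⟩
        | black c h1 h2 => exact ⟨_, _, .red b hu (.black c h1 h2), by omega⟩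
      | black b hu hv => exact ⟨_, _, .black b hu hv, by omega⟩
    | violation b hu hv =>
      cases hv with
      | red c h1 h2 => exact ⟨_, _, .black b hu (.red c h1 h2), by omega⟩
  · rw [if_neg hlt]
    by_cases hlt2 : RBTree.blackHeight t₁ < RBTree.blackHeight t₂
    · rw [if_pos hlt2]
      have H := RBTree.joinLeft_spec h₁ a h₂ (by omega)
      generalize hjl : RBTree.joinLeft t₁ a t₂ = jl at H ⊢
      cases H with
      | valid rc h =>
        cases h with
        | leaf => omega
        | red b h1 h2 =>
          cases h1 with
          | leaf => exact ⟨_, _, .red b .leaf h2, by omega⟩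
          | black c h3 h4 => exact ⟨_, _, .red b (.black c h3 h4) h2, by omega⟩
        | black b h1 h2 => exact ⟨_, _, .black b h1 h2, by omega⟩
      | violation b h1 h2 =>
        cases h1 with
        | red c h3 h4 => exact ⟨_, _, .black b (.red c h3 h4) h2, by omega⟩
    · rw [if_neg hlt2]
      have hn : n₁ = n₂ := by omega
      subst hn
      by_cases hc : RBTree.rootColor t₁ = Color.black ∧ RBTree.rootColor t₂ = Color.black
      · rw [if_pos hc]
        have e1 : y₁ = Color.black := by rw [← h₁.rc, hc.1]
        have e2 : y₂ = Color.black := by rw [← h₂.rc, hc.2]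
        subst e1; subst e2
        exact ⟨_, _, .red a h₁ h₂, by omega⟩
      · rw [if_neg hc]
        exact ⟨_, _, .black a h₁ h₂, by omega⟩
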